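/- Let A ∈ C¹(ℝ³;ℝ³) be autonomous (time-independent) satisfying ‖∇A‖_∞ < π/(2T). Then the functional I(q) = ∫₀ᵀ (1 − √(1 − |q̇|²)) dt + ∫₀ᵀ q̇·A(q) dt is non-negative on K = {q T-periodic Lipschitz : ‖q̇‖_∞ ≤ 1}, and every constant function is a global minimizer with I ≡ 0 on constants. -/

import Mathlib

open MeasureTheory intervalIntegral Filter Topology Set
open scoped NNReal

variable {E : Type*} [NormedAddCommGroup E] [NormedSpace ℝ E] [FiniteDimensional ℝ E]

/-- FTC for Lipschitz functions, via difference quotients and dominated convergence. -/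
lemma lip_ftc {K : ℝ≥0} {f : ℝ → E} (hf : LipschitzWith K f) (a b : ℝ) :
    ∫ t in a..b, deriv f t = f b - f a := by
  have hc : Continuous f := hf.continuous
  have hii : ∀ u v : ℝ, IntervalIntegrable f volume u v := fun u v =>
    hc.intervalIntegrable u v
  have hpos : ∀ n : ℕ, (0:ℝ) < 1/((n:ℝ)+1) := fun n => by positivity
  -- the integral of the difference quotient
  have key : ∀ n : ℕ, (∫ t in a..b, ((n : ℝ) + 1) • (f (t + 1/((n:ℝ)+1)) - f t)) =
      ((n : ℝ) + 1) • ((∫ t in b..(b + 1/((n:ℝ)+1)), f t) - ∫ t in a..(a + 1/((n:ℝ)+1)), f t) := by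
    intro n
    set h : ℝ := 1/((n:ℝ)+1) with hh
    have hfa : IntervalIntegrable (fun t => f (t + h)) volume a b :=
      Continuous.intervalIntegrable (hc.comp (continuous_add_right h)) a b
    have h1 : (∫ t in a..b, f (t + h)) = ∫ t in (a+h)..(b+h), f t :=
      integral_comp_add_right f h
    have h2 : (∫ t in a..b, (f (t + h) - f t)) =
        (∫ t in (a+h)..(b+h), f t) - ∫ t in a..b, f t := by
      rw [integral_sub hfa (hii a b), h1]
    have e1 : (∫ t in a..(b+h), f t) = (∫ t in a..b, f t) + ∫ t in b..(b+h), f t :=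
      (integral_add_adjacent_intervals (hii a b) (hii b (b+h))).symm
    have e2 : (∫ t in a..(b+h), f t) = (∫ t in a..(a+h), f t) + ∫ t in (a+h)..(b+h), f t :=
      (integral_add_adjacent_intervals (hii a (a+h)) (hii (a+h) (b+h))).symm
    have hX : (∫ t in (a+h)..(b+h), f t) = (∫ t in a..(b+h), f t) - ∫ t in a..(a+h), f t := by
      rw [e2]; abel
    have hZ : (∫ t in b..(b+h), f t) = (∫ t in a..(b+h), f t) - ∫ t in a..b, f t := by
      rw [e1]; abel
    rw [intervalIntegral.integral_smul, h2, hX, hZ]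
    congr 1
    abel
  -- limit of the right-hand side
  have lim1 : ∀ c : ℝ, Tendsto (fun n : ℕ => ((n:ℝ)+1) • ∫ t in c..(c + 1/((n:ℝ)+1)), f t)
      atTop (𝓝 (f c)) := by
    intro c
    have hF : HasDerivAt (fun x => ∫ t in c..x, f t) (f c) c :=
      integral_hasDerivAt_right (hii c c)
        hc.stronglyMeasurable.stronglyMeasurableAtFilter hc.continuousAt
    have hslope := hasDerivAt_iff_tendsto_slope.mp hF
    have hseq : Tendsto (fun n : ℕ => c + 1/((n:ℝ)+1)) atTop (𝓝[≠] c) := by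
      apply tendsto_nhdsWithin_of_tendsto_nhds_of_eventually_within
      · have := tendsto_one_div_add_atTop_nhds_zero_nat (𝕜 := ℝ)
        simpa using (tendsto_const_nhds (x := c)).add this
      · exact Eventually.of_forall fun n => by
          simp only [mem_compl_iff, mem_singleton_iff]
          nlinarith [hpos n]
    have := hslope.comp hseq
    convert this using 2 with n
    simp only [Function.comp_apply, slope_def_module]
    rw [intervalIntegral.integral_same]
    rw [add_sub_cancel_left, one_div, inv_inv]
    simp
  -- dominated convergence
  have lim2 : Tendsto (fun n : ℕ => ∫ t in a..b, ((n : ℝ) + 1) • (f (t + 1/((n:ℝ)+1)) - f t))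
      atTop (𝓝 (∫ t in a..b, deriv f t)) := by
    apply intervalIntegral.tendsto_integral_filter_of_dominated_convergence
      (bound := fun _ => (K : ℝ))
    · exact Eventually.of_forall fun n =>
        (Continuous.aestronglyMeasurable (by fun_prop)).restrict
    · refine Eventually.of_forall fun n => Eventually.of_forall fun t _ => ?_
      have hn : (0:ℝ) < (n:ℝ)+1 := by positivity
      have h1 : ‖f (t + 1/((n:ℝ)+1)) - f t‖ ≤ (K:ℝ) * (1/((n:ℝ)+1)) := by
        have := hf.dist_le_mul (t + 1/((n:ℝ)+1)) t
        rw [dist_eq_norm] at this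
        simpa [dist_eq_norm, abs_of_pos hn] using this
      rw [norm_smul]
      calc ‖((n:ℝ)+1)‖ * ‖f (t + 1/((n:ℝ)+1)) - f t‖
          ≤ ((n:ℝ)+1) * ((K:ℝ) * (1/((n:ℝ)+1))) := by
            rw [Real.norm_eq_abs, abs_of_pos hn]
            exact mul_le_mul_of_nonneg_left h1 hn.le
        _ = (K:ℝ) := by field_simp
    · exact intervalIntegrable_const
    · have hae := hf.ae_differentiableAt (μ := volume)
      filter_upwards [hae] with t ht _
      have hD : HasDerivAt f (deriv f t) t := ht.hasDerivAt
      have hslope := hasDerivAt_iff_tendsto_slope.mp hD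
      have hseq : Tendsto (fun n : ℕ => t + 1/((n:ℝ)+1)) atTop (𝓝[≠] t) := by
        apply tendsto_nhdsWithin_of_tendsto_nhds_of_eventually_within
        · have := tendsto_one_div_add_atTop_nhds_zero_nat (𝕜 := ℝ)
          simpa using (tendsto_const_nhds (x := t)).add this
        · exact Eventually.of_forall fun n => by
            simp only [mem_compl_iff, mem_singleton_iff]
            nlinarith [hpos n]
      have := hslope.comp hseq
      convert this using 2 with n
      simp only [Function.comp_apply, slope_def_module]
      rw [add_sub_cancel_left, one_div, inv_inv]
  -- conclude
  have limR : Tendsto (fun n : ℕ => ((n : ℝ) + 1) •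
      ((∫ t in b..(b + 1/((n:ℝ)+1)), f t) - ∫ t in a..(a + 1/((n:ℝ)+1)), f t))
      atTop (𝓝 (f b - f a)) := by
    have := (lim1 b).sub (lim1 a)
    simpa [smul_sub] using this
  have : Tendsto (fun n : ℕ => ∫ t in a..b, ((n : ℝ) + 1) • (f (t + 1/((n:ℝ)+1)) - f t))
      atTop (𝓝 (f b - f a)) := by
    simp only [key]; exact limR
  exact tendsto_nhds_unique lim2 this

lemma bdd_meas_intervalIntegrable {g : ℝ → ℝ} (hm : AEStronglyMeasurable g volume)
    {a b C : ℝ} (hC : ∀ t ∈ Set.uIoc a b, ‖g t‖ ≤ C) : IntervalIntegrable g volume a b := by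
  apply IntervalIntegrable.mono_fun' (g := fun _ => C) intervalIntegrable_const hm.restrict
  rw [Filter.EventuallyLE, ae_restrict_iff' measurableSet_uIoc]
  exact Eventually.of_forall hC

lemma lip_deriv_norm_le {K : ℝ≥0} {f : ℝ → E} (hf : LipschitzWith K f) (t : ℝ) :
    ‖deriv f t‖ ≤ K := by
  by_cases hd : DifferentiableAt ℝ f t
  · have hslope := (hasDerivAt_iff_tendsto_slope.mp hd.hasDerivAt).norm
    refine le_of_tendsto hslope ?_
    filter_upwards [self_mem_nhdsWithin] with x (hx : x ≠ t)
    rw [slope_def_module, norm_smul, norm_inv, Real.norm_eq_abs]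
    have hxt : (0:ℝ) < |x - t| := abs_pos.mpr (sub_ne_zero.mpr hx)
    rw [inv_mul_le_iff₀ hxt]
    have := hf.dist_le_mul x t
    rw [dist_eq_norm, dist_eq_norm] at this
    simpa [Real.norm_eq_abs, abs_sub_comm, mul_comm] using this
  · simp [deriv_zero_of_not_differentiableAt hd]

/-- Self-convolution Fubini identity for a bounded nonneg measurable function. -/
lemma selfconv {g : ℝ → ℝ} (hg : Measurable g) (h0 : ∀ t, 0 ≤ g t) (h1 : ∀ t, g t ≤ 1)
    {a b : ℝ} (hab : a ≤ b) :
    (∫ t in a..b, g t * ∫ s in a..t, g s) = (∫ t in a..b, g t)^2/2 ∧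
    (∫ t in a..b, g t * ∫ s in t..b, g s) = (∫ t in a..b, g t)^2/2 := by
  have hnorm : ∀ t, ‖g t‖ ≤ 1 := fun t => by
    rw [Real.norm_eq_abs, abs_of_nonneg (h0 t)]; exact h1 t
  have gii : ∀ u v : ℝ, IntervalIntegrable g volume u v := fun u v =>
    bdd_meas_intervalIntegrable hg.aestronglyMeasurable (fun t _ => hnorm t)
  set G : ℝ → ℝ := fun t => ∫ s in a..t, g s with hG
  have Gcont : Continuous G := intervalIntegral.continuous_primitive gii a
  set S : ℝ := ∫ t in a..b, g t with hS
  have hGbd : ∀ t, |G t| ≤ |t - a| := by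
    intro t
    have := intervalIntegral.norm_integral_le_of_norm_le_const (C := 1)
      (fun s _ => hnorm s) (f := g) (a := a) (b := t)
    simpa using this
  -- integrability of the two products
  have meas1 : Measurable fun t => g t * G t := hg.mul Gcont.measurable
  have prodbd : ∀ (H : ℝ → ℝ), (∀ t ∈ Set.uIoc a b, |H t| ≤ b - a) →
      ∀ t ∈ Set.uIoc a b, ‖g t * H t‖ ≤ b - a := by
    intro H hH t ht
    rw [norm_mul, Real.norm_eq_abs, Real.norm_eq_abs, abs_of_nonneg (h0 t)]
    calc g t * |H t| ≤ 1 * (b - a) :=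
          mul_le_mul (h1 t) (hH t ht) (abs_nonneg _) zero_le_one
      _ = b - a := one_mul _
  have hGbd' : ∀ t ∈ Set.uIoc a b, |G t| ≤ b - a := by
    intro t ht
    rw [Set.uIoc_of_le hab] at ht
    calc |G t| ≤ |t - a| := hGbd t
      _ = t - a := abs_of_nonneg (by linarith [ht.1.le])
      _ ≤ b - a := by linarith [ht.2]
  have int1 : IntervalIntegrable (fun t => g t * G t) volume a b :=
    bdd_meas_intervalIntegrable meas1.aestronglyMeasurable (prodbd G hGbd')
  set H : ℝ → ℝ := fun t => ∫ s in t..b, g s with hH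
  have claim0 : ∀ t, G t + H t = S := fun t =>
    integral_add_adjacent_intervals (gii a t) (gii t b)
  have Hcont : Continuous H := by
    have : H = fun t => S - G t := by
      funext t; have := claim0 t; linarith
    rw [this]; exact continuous_const.sub Gcont
  have hHbd' : ∀ t ∈ Set.uIoc a b, |H t| ≤ b - a := by
    intro t ht
    rw [Set.uIoc_of_le hab] at ht
    have := intervalIntegral.norm_integral_le_of_norm_le_const (C := 1)
      (fun s _ => hnorm s) (f := g) (a := t) (b := b)
    simp only [Real.norm_eq_abs] at this
    calc |H t| ≤ 1 * |b - t| := this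
      _ = b - t := by rw [one_mul, abs_of_nonneg (by linarith [ht.2])]
      _ ≤ b - a := by linarith [ht.1.le]
  have meas2 : Measurable fun t => g t * H t := hg.mul Hcont.measurable
  have int2 : IntervalIntegrable (fun t => g t * H t) volume a b :=
    bdd_meas_intervalIntegrable meas2.aestronglyMeasurable (prodbd H hHbd')
  set I₁ : ℝ := ∫ t in a..b, g t * G t with hI₁
  set I₂ : ℝ := ∫ t in a..b, g t * H t with hI₂
  -- Step 1 : I₁ + I₂ = S ^ 2
  have step1 : I₁ + I₂ = S ^ 2 := by
    rw [hI₁, hI₂, ← integral_add int1 int2]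
    have : ∀ t : ℝ, g t * G t + g t * H t = g t * S := fun t => by
      rw [← mul_add, claim0 t]
    simp only [this]
    rw [intervalIntegral.integral_mul_const, ← hS, sq]
  -- Step 2 : I₁ = I₂ via Fubini
  set Φ : ℝ × ℝ → ℝ := {p : ℝ × ℝ | p.1 < p.2}.indicator (fun p => g p.1 * g p.2) with hΦ
  have measΦ : Measurable Φ :=
    ((hg.comp measurable_fst).mul (hg.comp measurable_snd)).indicator
      (measurableSet_lt measurable_fst measurable_snd)
  set μab := volume.restrict (Ioc a b) with hμab
  have intΦ : Integrable Φ (μab.prod μab) := by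
    refine (integrable_const (1:ℝ)).mono' measΦ.aestronglyMeasurable ?_
    refine Eventually.of_forall fun p => ?_
    rw [hΦ, Real.norm_eq_abs]
    rcases Set.indicator_eq_zero_or_self {p : ℝ × ℝ | p.1 < p.2} (fun p => g p.1 * g p.2) p
      with h | h
    · rw [h]; simp
    · rw [h, abs_of_nonneg (mul_nonneg (h0 _) (h0 _))]
      calc g p.1 * g p.2 ≤ 1 * 1 := mul_le_mul (h1 _) (h1 _) (h0 _) zero_le_one
        _ = 1 := one_mul 1
  have swap : (∫ t, (∫ s, Φ (t, s) ∂μab) ∂μab) = ∫ s, (∫ t, Φ (t, s) ∂μab) ∂μab := by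
    exact integral_integral_swap intΦ
  have eq2 : I₂ = ∫ t, (∫ s, Φ (t, s) ∂μab) ∂μab := by
    rw [hI₂, intervalIntegral.integral_of_le hab]
    refine setIntegral_congr_fun measurableSet_Ioc fun t ht => ?_
    beta_reduce
    have hHt : H t = ∫ s, (Set.Ioi t).indicator g s ∂μab := by
      rw [hμab, setIntegral_indicator measurableSet_Ioi]
      show (∫ s in t..b, g s) = _
      rw [intervalIntegral.integral_of_le ht.2]
      have hset : Set.Ioc t b = Set.Ioc a b ∩ Set.Ioi t := by
        ext s
        simp only [Set.mem_Ioc, Set.mem_inter_iff, Set.mem_Ioi]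
        constructor
        · rintro ⟨h₁, h₂⟩; exact ⟨⟨lt_trans ht.1 h₁, h₂⟩, h₁⟩
        · rintro ⟨⟨_, h₂⟩, h₃⟩; exact ⟨h₃, h₂⟩
      rw [hset]
    rw [hHt, ← MeasureTheory.integral_const_mul]
    refine integral_congr_ae (Eventually.of_forall fun s => ?_)
    beta_reduce
    rw [hΦ]
    by_cases hts : t < s
    · rw [Set.indicator_of_mem (show (t,s) ∈ {p : ℝ × ℝ | p.1 < p.2} from hts),
        Set.indicator_of_mem (Set.mem_Ioi.mpr hts)]
    · rw [Set.indicator_of_notMem (show (t,s) ∉ {p : ℝ × ℝ | p.1 < p.2} from hts),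
        Set.indicator_of_notMem (by simpa using hts), mul_zero]
  have eq1 : I₁ = ∫ s, (∫ t, Φ (t, s) ∂μab) ∂μab := by
    rw [hI₁, intervalIntegral.integral_of_le hab]
    refine setIntegral_congr_fun measurableSet_Ioc fun s hs => ?_
    beta_reduce
    have hGs : G s = ∫ t, (Set.Iio s).indicator g t ∂μab := by
      rw [hμab, setIntegral_indicator measurableSet_Iio]
      show (∫ t in a..s, g t) = _
      rw [intervalIntegral.integral_of_le hs.1.le, integral_Ioc_eq_integral_Ioo]
      have hset : Set.Ioo a s = Set.Ioc a b ∩ Set.Iio s := by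
        ext t
        simp only [Set.mem_Ioo, Set.mem_inter_iff, Set.mem_Ioc, Set.mem_Iio]
        constructor
        · rintro ⟨h₁, h₂⟩; exact ⟨⟨h₁, le_trans h₂.le hs.2⟩, h₂⟩
        · rintro ⟨⟨h₁, _⟩, h₃⟩; exact ⟨h₁, h₃⟩
      rw [hset]
    rw [hGs, ← MeasureTheory.integral_const_mul]
    refine integral_congr_ae (Eventually.of_forall fun t => ?_)
    beta_reduce
    rw [hΦ]
    by_cases hts : t < s
    · rw [Set.indicator_of_mem (show (t,s) ∈ {p : ℝ × ℝ | p.1 < p.2} from hts),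
        Set.indicator_of_mem (Set.mem_Iio.mpr hts)]
      ring
    · rw [Set.indicator_of_notMem (show (t,s) ∉ {p : ℝ × ℝ | p.1 < p.2} from hts),
        Set.indicator_of_notMem (by simpa using hts), mul_zero]
  have step2 : I₁ = I₂ := by rw [eq1, eq2, swap]
  have k1 : I₁ = S ^ 2 / 2 := by
    have := step1; rw [← step2] at this; linarith
  have k2 : I₂ = S ^ 2 / 2 := by rw [← step2]; exact k1
  exact ⟨k1, k2⟩

open scoped RealInnerProductSpace

set_option maxHeartbeats 1000000 in
/-- If `A ∈ C¹(ℝ³;ℝ³)` is autonomous with `‖∇A‖_∞ < π/(2T)`, then the action functional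
`I(q) = ∫₀ᵀ (1 − √(1 − |q̇|²)) dt + ∫₀ᵀ q̇·A(q) dt` is non-negative on
`K = {q T-periodic Lipschitz : ‖q̇‖_∞ ≤ 1}`, and every constant function is a global
minimizer with `I ≡ 0` on constants. -/
theorem stmt13 (T : ℝ) (hT : 0 < T)
    (A : EuclideanSpace ℝ (Fin 3) → EuclideanSpace ℝ (Fin 3)) (M : ℝ)
    (hA : ContDiff ℝ 1 A)
    (hM : ∀ x, ‖fderiv ℝ A x‖ ≤ M) (hMsmall : M < Real.pi / (2 * T)) :
    (∀ q : ℝ → EuclideanSpace ℝ (Fin 3),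
      Function.Periodic q T → LipschitzWith 1 q →
      0 ≤ (∫ t in (0:ℝ)..T, (1 - Real.sqrt (1 - ‖deriv q t‖ ^ 2))) +
          ∫ t in (0:ℝ)..T, ⟪deriv q t, A (q t)⟫) ∧
    (∀ b : EuclideanSpace ℝ (Fin 3),
      (∫ t in (0:ℝ)..T,
          (1 - Real.sqrt (1 - ‖deriv (fun _ : ℝ => b) t‖ ^ 2))) +
        (∫ t in (0:ℝ)..T, ⟪deriv (fun _ : ℝ => b) t, A b⟫) = 0) := by
  have M0 : 0 ≤ M := le_trans (norm_nonneg _) (hM 0)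
  have hMT : M * T < Real.pi / 2 := by
    rw [div_mul_eq_div_div] at hMsmall
    calc M * T < Real.pi / 2 / T * T := by
          exact mul_lt_mul_of_pos_right hMsmall hT
      _ = Real.pi / 2 := by field_simp
  constructor
  · intro q hper hlip
    have hqcont : Continuous q := hlip.continuous
    have hqT : q T = q 0 := by simpa using hper 0
    set b₀ : EuclideanSpace ℝ (Fin 3) := q 0 with hb₀
    set ρ : ℝ → ℝ := fun t => ‖deriv q t‖ with hρ
    have ρmeas : Measurable ρ := (measurable_deriv q).norm
    have ρ0 : ∀ t, 0 ≤ ρ t := fun t => norm_nonneg _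
    have ρ1 : ∀ t, ρ t ≤ 1 := fun t => by
      simpa using lip_deriv_norm_le hlip t
    have ρn : ∀ t, ‖ρ t‖ ≤ 1 := fun t => by
      rw [Real.norm_eq_abs, abs_of_nonneg (ρ0 t)]; exact ρ1 t
    have ρii : ∀ u v : ℝ, IntervalIntegrable ρ volume u v := fun u v =>
      bdd_meas_intervalIntegrable ρmeas.aestronglyMeasurable (fun t _ => ρn t)
    set S : ℝ := ∫ t in (0:ℝ)..T, ρ t with hS
    set X : ℝ := ∫ t in (0:ℝ)..T, ρ t ^ 2 with hX
    have Xii : IntervalIntegrable (fun t => ρ t ^ 2) volume 0 T :=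
      bdd_meas_intervalIntegrable (ρmeas.pow_const 2).aestronglyMeasurable
        (fun t _ => by
          rw [Real.norm_eq_abs, abs_of_nonneg (sq_nonneg _)]
          calc ρ t ^ 2 ≤ 1 ^ 2 := by nlinarith [ρ0 t, ρ1 t]
            _ = 1 := one_pow 2)
    have X0 : 0 ≤ X := intervalIntegral.integral_nonneg hT.le fun t _ => sq_nonneg _
    have S0 : 0 ≤ S := intervalIntegral.integral_nonneg hT.le fun t _ => ρ0 t
    -- Cauchy–Schwarz : S^2 ≤ T * X
    have hCS : S ^ 2 ≤ T * X := by
      have hexp : ∀ t : ℝ, (ρ t - S/T)^2 = ρ t ^ 2 - (2*S/T) * ρ t + (S/T)^2 := fun t => by ring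
      have h0' : (0:ℝ) ≤ ∫ t in (0:ℝ)..T, (ρ t - S/T)^2 :=
        intervalIntegral.integral_nonneg hT.le fun t _ => sq_nonneg _
      have hval : (∫ t in (0:ℝ)..T, (ρ t - S/T)^2) = X - (2*S/T) * S + (S/T)^2 * T := by
        simp only [hexp]
        rw [intervalIntegral.integral_add (Xii.sub ((ρii 0 T).const_mul (2*S/T)))
            intervalIntegrable_const,
          intervalIntegral.integral_sub Xii ((ρii 0 T).const_mul (2*S/T)),
          intervalIntegral.integral_const_mul, intervalIntegral.integral_const]
        simp [hX, hS]
        ring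
      rw [hval] at h0'
      have hT' : T ≠ 0 := ne_of_gt hT
      have : 0 ≤ X - S^2/T := by
        have : (2*S/T) * S - (S/T)^2 * T = S^2/T := by field_simp; ring
        linarith [h0', this]
      have h2 := mul_nonneg this hT.le
      have h3 : (X - S^2/T) * T = X*T - S^2 := by field_simp
      rw [h3] at h2; linarith
    -- first integral bound
    have first_bound : X / 2 ≤ ∫ t in (0:ℝ)..T, (1 - Real.sqrt (1 - ‖deriv q t‖ ^ 2)) := by
      have ptwise : ∀ t : ℝ, ρ t ^ 2 / 2 ≤ 1 - Real.sqrt (1 - ρ t ^ 2) := by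
        intro t
        have h1' : Real.sqrt (1 - ρ t ^ 2) ≤ 1 - ρ t ^ 2 / 2 := by
          have hle : (1 - ρ t ^ 2) ≤ (1 - ρ t ^ 2 / 2)^2 := by nlinarith [sq_nonneg (ρ t), sq_nonneg (ρ t ^ 2)]
          calc Real.sqrt (1 - ρ t ^ 2) ≤ Real.sqrt ((1 - ρ t ^ 2 / 2)^2) :=
                Real.sqrt_le_sqrt hle
            _ = |1 - ρ t ^ 2 / 2| := Real.sqrt_sq_eq_abs _
            _ = 1 - ρ t ^ 2 / 2 := abs_of_nonneg (by nlinarith [ρ0 t, ρ1 t])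
        linarith
      have intsqrt : IntervalIntegrable
          (fun t => 1 - Real.sqrt (1 - ρ t ^ 2)) volume 0 T := by
        have m1 : Measurable fun t => 1 - Real.sqrt (1 - ρ t ^ 2) := by
          apply Measurable.sub measurable_const
          exact Real.continuous_sqrt.measurable.comp (measurable_const.sub (ρmeas.pow_const 2))
        apply bdd_meas_intervalIntegrable m1.aestronglyMeasurable (C := 1)
        intro t _
        have h1 : 0 ≤ Real.sqrt (1 - ρ t ^ 2) := Real.sqrt_nonneg _
        have h2 : Real.sqrt (1 - ρ t ^ 2) ≤ 1 :=
          Real.sqrt_le_one.mpr (by nlinarith [sq_nonneg (ρ t)])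
        rw [Real.norm_eq_abs, abs_of_nonneg (by linarith)]
        linarith
      have := intervalIntegral.integral_mono_on hT.le
        (Xii.div_const 2) intsqrt (fun t _ => ptwise t)
      calc X / 2 = ∫ t in (0:ℝ)..T, ρ t ^ 2 / 2 := by
            rw [intervalIntegral.integral_div, hX]
        _ ≤ ∫ t in (0:ℝ)..T, (1 - Real.sqrt (1 - ρ t ^ 2)) := this
        _ = ∫ t in (0:ℝ)..T, (1 - Real.sqrt (1 - ‖deriv q t‖ ^ 2)) := by rfl
    -- Lipschitz bound for A
    have hALip : ∀ x y : EuclideanSpace ℝ (Fin 3), ‖A x - A y‖ ≤ M * ‖x - y‖ := by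
      intro x y
      exact Convex.norm_image_sub_le_of_norm_fderiv_le
        (fun z _ => (hA.differentiable one_ne_zero).differentiableAt)
        (fun z _ => hM z) convex_univ (Set.mem_univ y) (Set.mem_univ x)
    have qsub : ∀ t : ℝ, ‖q t - b₀‖ ≤ |t| := by
      intro t
      have := hlip.dist_le_mul t 0
      simpa [hb₀, dist_eq_norm] using this
    have derivq_meas : Measurable (deriv q) := measurable_deriv q
    have derivq_ii : IntervalIntegrable (deriv q) volume 0 T := by
      refine IntervalIntegrable.mono_fun (f := fun _ : ℝ => (1:ℝ))
        intervalIntegrable_const derivq_meas.aestronglyMeasurable.restrict ?_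
      exact Eventually.of_forall fun t => by simpa using ρ1 t
    have Aqt_cont : Continuous fun t => A (q t) := hA.continuous.comp hqcont
    -- the two pieces of the second integral
    have g1meas : Measurable fun t => (inner ℝ (deriv q t) (A (q t) - A b₀) : ℝ) :=
      Measurable.inner derivq_meas (Aqt_cont.sub continuous_const).measurable
    have g2meas : Measurable fun t => (inner ℝ (deriv q t) (A b₀) : ℝ) :=
      Measurable.inner derivq_meas measurable_const
    have g1bd : ∀ t : ℝ, |(inner ℝ (deriv q t) (A (q t) - A b₀) : ℝ)| ≤
        M * (ρ t * ‖q t - b₀‖) := by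
      intro t
      calc |(inner ℝ (deriv q t) (A (q t) - A b₀) : ℝ)|
          ≤ ‖deriv q t‖ * ‖A (q t) - A b₀‖ := abs_real_inner_le_norm _ _
        _ ≤ ‖deriv q t‖ * (M * ‖q t - b₀‖) :=
            mul_le_mul_of_nonneg_left (hALip (q t) b₀) (norm_nonneg _)
        _ = M * (ρ t * ‖q t - b₀‖) := by rw [hρ]; ring
    have g1ii : IntervalIntegrable
        (fun t => (inner ℝ (deriv q t) (A (q t) - A b₀) : ℝ)) volume 0 T := by
      apply bdd_meas_intervalIntegrable g1meas.aestronglyMeasurable (C := M * T)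
      intro t ht
      rw [Set.uIoc_of_le hT.le] at ht
      rw [Real.norm_eq_abs]
      calc |(inner ℝ (deriv q t) (A (q t) - A b₀) : ℝ)| ≤ M * (ρ t * ‖q t - b₀‖) := g1bd t
        _ ≤ M * (1 * |t|) := by
            apply mul_le_mul_of_nonneg_left _ M0
            exact mul_le_mul (ρ1 t) (qsub t) (norm_nonneg _) zero_le_one
        _ = M * |t| := by ring
        _ ≤ M * T := by
            apply mul_le_mul_of_nonneg_left _ M0
            rw [abs_of_nonneg ht.1.le]; exact ht.2
    have g2ii : IntervalIntegrable
        (fun t => (inner ℝ (deriv q t) (A b₀) : ℝ)) volume 0 T := by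
      apply bdd_meas_intervalIntegrable g2meas.aestronglyMeasurable (C := ‖A b₀‖)
      intro t _
      rw [Real.norm_eq_abs]
      calc |(inner ℝ (deriv q t) (A b₀) : ℝ)| ≤ ‖deriv q t‖ * ‖A b₀‖ :=
            abs_real_inner_le_norm _ _
        _ ≤ 1 * ‖A b₀‖ := mul_le_mul_of_nonneg_right (ρ1 t) (norm_nonneg _)
        _ = ‖A b₀‖ := one_mul _
    have second_eq : (∫ t in (0:ℝ)..T, ⟪deriv q t, A (q t)⟫) =
        (∫ t in (0:ℝ)..T, (inner ℝ (deriv q t) (A (q t) - A b₀) : ℝ)) +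
        ∫ t in (0:ℝ)..T, (inner ℝ (deriv q t) (A b₀) : ℝ) := by
      rw [← intervalIntegral.integral_add g1ii g2ii]
      apply intervalIntegral.integral_congr
      intro t _
      beta_reduce
      rw [← inner_add_right]
      simp
    have hg2 : (∫ t in (0:ℝ)..T, (inner ℝ (deriv q t) (A b₀) : ℝ)) = 0 := by
      rw [intervalIntegral.integral_of_le hT.le]
      have flip : ∀ t : ℝ, (inner ℝ (deriv q t) (A b₀) : ℝ) = ⟪A b₀, deriv q t⟫ :=
        fun t => real_inner_comm _ _
      simp only [flip]
      rw [integral_inner derivq_ii.1 (A b₀)]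
      have : (∫ t in Set.Ioc (0:ℝ) T, deriv q t) = 0 := by
        rw [← intervalIntegral.integral_of_le hT.le, lip_ftc hlip, hqT, sub_self]
      rw [this, inner_zero_right]
    -- pointwise control of the distance to the base point
    set R : ℝ → ℝ := fun t => ∫ s in (0:ℝ)..t, ρ s with hR
    have Rcont : Continuous R := intervalIntegral.continuous_primitive ρii 0
    have hfR : ∀ t ∈ Set.Icc (0:ℝ) T, ‖q t - b₀‖ ≤ R t := by
      intro t ht
      have h1 : q t - b₀ = ∫ s in (0:ℝ)..t, deriv q s := (lip_ftc hlip 0 t).symm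
      rw [h1]
      exact intervalIntegral.norm_integral_le_integral_norm ht.1
    have hfS : ∀ t ∈ Set.Icc (0:ℝ) T, ‖q t - b₀‖ ≤ ∫ s in t..T, ρ s := by
      intro t ht
      have h1 : q T - q t = ∫ s in t..T, deriv q s := (lip_ftc hlip t T).symm
      calc ‖q t - b₀‖ = ‖q T - q t‖ := by rw [hqT, norm_sub_rev]
        _ = ‖∫ s in t..T, deriv q s‖ := by rw [h1]
        _ ≤ ∫ s in t..T, ‖deriv q s‖ := intervalIntegral.norm_integral_le_integral_norm ht.2
    -- midpoint of the total variation
    obtain ⟨t₀, ht₀mem, ht₀⟩ : ∃ t₀ ∈ Set.Icc (0:ℝ) T, R t₀ = S / 2 := by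
      have hsub := intermediate_value_Icc hT.le Rcont.continuousOn
      have hmem : S / 2 ∈ Set.Icc (R 0) (R T) := by
        constructor
        · rw [hR]; simp only [intervalIntegral.integral_same]; linarith
        · show S / 2 ≤ R T
          have : R T = S := rfl
          rw [this]; linarith
      obtain ⟨t₀, ht₀mem, ht₀⟩ := hsub hmem
      exact ⟨t₀, ht₀mem, ht₀⟩
    have hρtail : (∫ s in t₀..T, ρ s) = S / 2 := by
      have := intervalIntegral.integral_add_adjacent_intervals (ρii 0 t₀) (ρii t₀ T)
      have hRt₀ : R t₀ = ∫ s in (0:ℝ)..t₀, ρ s := rfl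
      rw [← hRt₀, ht₀] at this
      have hST : (∫ s in (0:ℝ)..T, ρ s) = S := rfl
      rw [hST] at this
      linarith
    -- integrability of the various products
    have qnmeas : Measurable fun t => ‖q t - b₀‖ :=
      (hqcont.sub continuous_const).norm.measurable
    have Jii : ∀ u v : ℝ, 0 ≤ u → v ≤ T → u ≤ v →
        IntervalIntegrable (fun t => ρ t * ‖q t - b₀‖) volume u v := by
      intro u v hu hv huv
      apply bdd_meas_intervalIntegrable (ρmeas.mul qnmeas).aestronglyMeasurable (C := T)
      intro t ht
      rw [Set.uIoc_of_le huv] at ht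
      rw [Real.norm_eq_abs, Pi.mul_apply, abs_of_nonneg (mul_nonneg (ρ0 t) (norm_nonneg _))]
      calc ρ t * ‖q t - b₀‖ ≤ 1 * |t| :=
            mul_le_mul (ρ1 t) (qsub t) (norm_nonneg _) zero_le_one
        _ = |t| := one_mul _
        _ ≤ T := by rw [abs_of_nonneg (le_trans hu ht.1.le)]; exact le_trans ht.2 hv
    have Rbd : ∀ t ∈ Set.uIoc (0:ℝ) T, ‖R t‖ ≤ T := by
      intro t ht
      rw [Set.uIoc_of_le hT.le] at ht
      have := intervalIntegral.norm_integral_le_of_norm_le_const (C := 1)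
        (fun s _ => ρn s) (f := ρ) (a := (0:ℝ)) (b := t)
      calc ‖R t‖ ≤ 1 * |t - 0| := this
        _ = |t| := by rw [one_mul, sub_zero]
        _ ≤ T := by rw [abs_of_nonneg ht.1.le]; exact ht.2
    have ρRii : ∀ u v : ℝ, 0 ≤ u → v ≤ T → u ≤ v →
        IntervalIntegrable (fun t => ρ t * R t) volume u v := by
      intro u v hu hv huv
      apply bdd_meas_intervalIntegrable
        (ρmeas.mul Rcont.measurable).aestronglyMeasurable (C := T)
      intro t ht
      have ht' : t ∈ Set.uIoc (0:ℝ) T := by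
        rw [Set.uIoc_of_le huv] at ht
        rw [Set.uIoc_of_le hT.le]
        exact ⟨lt_of_le_of_lt hu ht.1, le_trans ht.2 hv⟩
      rw [Real.norm_eq_abs, Pi.mul_apply, abs_mul]
      have hRt := Rbd t ht'
      rw [Real.norm_eq_abs] at hRt
      calc |ρ t| * |R t| ≤ 1 * T := by
            apply mul_le_mul (ρn t) hRt (abs_nonneg _) zero_le_one
        _ = T := one_mul _
    have hHfun : ∀ t : ℝ, (∫ s in t..T, ρ s) = S - R t := by
      intro t
      have := intervalIntegral.integral_add_adjacent_intervals (ρii 0 t) (ρii t T)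
      have hRt : R t = ∫ s in (0:ℝ)..t, ρ s := rfl
      have hST : (∫ s in (0:ℝ)..T, ρ s) = S := rfl
      rw [← hRt, hST] at this
      linarith
    have ρHii : ∀ u v : ℝ, 0 ≤ u → v ≤ T → u ≤ v →
        IntervalIntegrable (fun t => ρ t * ∫ s in t..T, ρ s) volume u v := by
      intro u v hu hv huv
      have heq : (fun t => ρ t * ∫ s in t..T, ρ s) = fun t => ρ t * (S - R t) := by
        funext t; rw [hHfun t]
      rw [heq]
      apply bdd_meas_intervalIntegrable
        (ρmeas.mul (continuous_const.sub Rcont).measurable).aestronglyMeasurable (C := S + T)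
      intro t ht
      have ht' : t ∈ Set.uIoc (0:ℝ) T := by
        rw [Set.uIoc_of_le huv] at ht
        rw [Set.uIoc_of_le hT.le]
        exact ⟨lt_of_le_of_lt hu ht.1, le_trans ht.2 hv⟩
      have hRt := Rbd t ht'
      rw [Real.norm_eq_abs] at hRt
      rw [Real.norm_eq_abs, Pi.mul_apply, abs_mul]
      calc |ρ t| * |S - R t| ≤ 1 * (S + T) := by
            apply mul_le_mul (ρn t) _ (abs_nonneg _) zero_le_one
            have h1 := abs_le.mp hRt
            rw [abs_le]
            constructor <;> [linarith [h1.2]; linarith [h1.1]]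
        _ = S + T := one_mul _
    -- the key bound on J := ∫ ρ ‖q - b₀‖
    have hJ : (∫ t in (0:ℝ)..T, ρ t * ‖q t - b₀‖) ≤ S ^ 2 / 4 := by
      have hsplit : (∫ t in (0:ℝ)..T, ρ t * ‖q t - b₀‖) =
          (∫ t in (0:ℝ)..t₀, ρ t * ‖q t - b₀‖) + ∫ t in t₀..T, ρ t * ‖q t - b₀‖ :=
        (intervalIntegral.integral_add_adjacent_intervals
          (Jii 0 t₀ le_rfl ht₀mem.2 ht₀mem.1) (Jii t₀ T ht₀mem.1 le_rfl ht₀mem.2)).symm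
      have hJ1 : (∫ t in (0:ℝ)..t₀, ρ t * ‖q t - b₀‖) ≤ S ^ 2 / 8 := by
        have hmono : (∫ t in (0:ℝ)..t₀, ρ t * ‖q t - b₀‖) ≤ ∫ t in (0:ℝ)..t₀, ρ t * R t := by
          apply intervalIntegral.integral_mono_on ht₀mem.1
            (Jii 0 t₀ le_rfl ht₀mem.2 ht₀mem.1) (ρRii 0 t₀ le_rfl ht₀mem.2 ht₀mem.1)
          intro t ht
          exact mul_le_mul_of_nonneg_left
            (hfR t ⟨ht.1, le_trans ht.2 ht₀mem.2⟩) (ρ0 t)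
        have hval := (selfconv ρmeas ρ0 ρ1 ht₀mem.1).1
        have hRt₀ : (∫ t in (0:ℝ)..t₀, ρ t) = S / 2 := ht₀
        rw [hRt₀] at hval
        calc (∫ t in (0:ℝ)..t₀, ρ t * ‖q t - b₀‖) ≤ ∫ t in (0:ℝ)..t₀, ρ t * R t := hmono
          _ = (S/2)^2/2 := hval
          _ = S ^ 2 / 8 := by ring
      have hJ2 : (∫ t in t₀..T, ρ t * ‖q t - b₀‖) ≤ S ^ 2 / 8 := by
        have hmono : (∫ t in t₀..T, ρ t * ‖q t - b₀‖) ≤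
            ∫ t in t₀..T, ρ t * ∫ s in t..T, ρ s := by
          apply intervalIntegral.integral_mono_on ht₀mem.2
            (Jii t₀ T ht₀mem.1 le_rfl ht₀mem.2) (ρHii t₀ T ht₀mem.1 le_rfl ht₀mem.2)
          intro t ht
          exact mul_le_mul_of_nonneg_left
            (hfS t ⟨le_trans ht₀mem.1 ht.1, ht.2⟩) (ρ0 t)
        have hval := (selfconv ρmeas ρ0 ρ1 ht₀mem.2).2
        rw [hρtail] at hval
        calc (∫ t in t₀..T, ρ t * ‖q t - b₀‖) ≤
              ∫ t in t₀..T, ρ t * ∫ s in t..T, ρ s := hmono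
          _ = (S/2)^2/2 := hval
          _ = S ^ 2 / 8 := by ring
      rw [hsplit]; linarith
    -- lower bound for the first piece of the second integral
    have hg1 : -(M * (S ^ 2 / 4)) ≤
        ∫ t in (0:ℝ)..T, (inner ℝ (deriv q t) (A (q t) - A b₀) : ℝ) := by
      have hmono : (∫ t in (0:ℝ)..T, (-M) * (ρ t * ‖q t - b₀‖)) ≤
          ∫ t in (0:ℝ)..T, (inner ℝ (deriv q t) (A (q t) - A b₀) : ℝ) := by
        apply intervalIntegral.integral_mono_on hT.le
          ((Jii 0 T le_rfl le_rfl hT.le).const_mul (-M)) g1ii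
        intro t _
        have h1 := (abs_le.mp (g1bd t)).1
        linarith
      have hval : (∫ t in (0:ℝ)..T, (-M) * (ρ t * ‖q t - b₀‖)) =
          (-M) * ∫ t in (0:ℝ)..T, ρ t * ‖q t - b₀‖ :=
        intervalIntegral.integral_const_mul _ _
      have h2 : (-M) * (S ^ 2 / 4) ≤ (-M) * ∫ t in (0:ℝ)..T, ρ t * ‖q t - b₀‖ := by
        rcases eq_or_lt_of_le M0 with hM0 | hM0
        · rw [← hM0]; simp
        · rw [neg_mul, neg_mul, neg_le_neg_iff]
          exact mul_le_mul_of_nonneg_left hJ M0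
      calc -(M * (S ^ 2 / 4)) = (-M) * (S ^ 2 / 4) := by ring
        _ ≤ (-M) * ∫ t in (0:ℝ)..T, ρ t * ‖q t - b₀‖ := h2
        _ = ∫ t in (0:ℝ)..T, (-M) * (ρ t * ‖q t - b₀‖) := hval.symm
        _ ≤ _ := hmono
    -- final combination
    have hfinal : 0 ≤ X / 2 - M * (S ^ 2 / 4) := by
      have h4 : M * S ^ 2 ≤ M * (T * X) := mul_le_mul_of_nonneg_left hCS M0
      have h5 : (M * T) * X ≤ (Real.pi / 2) * X := mul_le_mul_of_nonneg_right hMT.le X0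
      have h6 : Real.pi * X ≤ 4 * X := mul_le_mul_of_nonneg_right Real.pi_le_four X0
      linarith [h4, h5, h6]
    have second_ge : -(M * (S ^ 2 / 4)) ≤ ∫ t in (0:ℝ)..T, ⟪deriv q t, A (q t)⟫ := by
      rw [second_eq, hg2, add_zero]
      exact hg1
    linarith [first_bound, second_ge, hfinal]

  · intro b
    simp [Real.sqrt_one]
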